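/- Let A = (a_1, …, a_n) and B = (b_0, …, b_{n−1}) be sequences of elements of S and D ⊆ S of size k − n − 1, with A, B, D pairwise disjoint, and let A* be obtained from A by interchanging two of its entries. Then P_D(A*, B) = (−1)^{t+1} P_D(A, B). -/

import Mathlib

/-- `detCols L` is the determinant of the `k × k` matrix whose `j`-th column is the
`j`-th entry of the list `L` (lists of length ≠ `k` are padded with `0`). -/
def detCols {F : Type} [CommRing F] {k : ℕ} (L : List (Fin k → F)) : F :=
  Matrix.det (Matrix.of fun i j : Fin k => L.getD (j : ℕ) 0 i)

/-- The Segre product `P_D(A, B)` of the sequences `A = (a_1, …, a_n)` and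
`B = (b_0, …, b_{n−1})` with base `D`, with respect to the family of tangent functions `T`:
`∏_{i=1}^n T_{D ∪ {a_1,…,a_{i−1},b_i,…,b_{n−1}}}(a_i) ·
  T_{D ∪ {a_1,…,a_{i−1},b_i,…,b_{n−1}}}(b_{i−1})⁻¹`. -/
def segreP {F : Type} [Field F] [DecidableEq F] {k : ℕ}
    (T : Finset (Fin k → F) → (Fin k → F) → F)
    (D : Finset (Fin k → F)) (A B : List (Fin k → F)) : F :=
  ∏ j ∈ Finset.range A.length,
    (T (D ∪ (A.take j).toFinset ∪ (B.drop (j + 1)).toFinset) (A.getD j 0) *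
      (T (D ∪ (A.take j).toFinset ∪ (B.drop (j + 1)).toFinset) (B.getD j 0))⁻¹)

/-- `T` is a family of tangent functions for `S` (with `t` tangent hyperplanes through
each subset of size `k − 2`): for every `Y ⊆ S` with `|Y| = k − 2` there is a set `Φ` of
`t` pairwise linearly independent linear forms, each vanishing on `Y` and nonzero at every
vector of `S \ Y`, with `T Y = ∏_{α ∈ Φ} α`. -/
def IsTangentFamily {F : Type} [Field F] [DecidableEq F] {k : ℕ} (t : ℕ)
    (S : Finset (Fin k → F)) (T : Finset (Fin k → F) → (Fin k → F) → F) : Prop :=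
  ∀ Y : Finset (Fin k → F), Y ⊆ S → Y.card = k - 2 →
    ∃ Φ : Finset ((Fin k → F) →ₗ[F] F),
      Φ.card = t ∧
      (∀ α ∈ Φ, ∀ β ∈ Φ, α ≠ β → ∀ c : F, α ≠ c • β) ∧
      (∀ α ∈ Φ, ∀ y ∈ Y, α y = 0) ∧
      (∀ α ∈ Φ, ∀ s ∈ S, s ∉ Y → α s ≠ 0) ∧
      (∀ x, T Y x = ∏ α ∈ Φ, α x)

/-- The subsequence of `L` consisting of the entries whose positions lie in `s`,
in their original order (`d` is a default value). -/
def subseq {α : Type} (d : α) (L : List α) (s : Finset ℕ) : List α :=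
  ((List.range L.length).filter (fun i => decide (i ∈ s))).map (fun i => L.getD i d)

/-- The subsequence of `L` consisting of the entries whose positions do not lie in `s`,
in their original order (`d` is a default value). -/
def subseqC {α : Type} (d : α) (L : List α) (s : Finset ℕ) : List α :=
  ((List.range L.length).filter (fun i => decide (i ∉ s))).map (fun i => L.getD i d)

/-- The number of transpositions needed (counted as the number of inversions) to reorder a
list of length `len` so that the entries in positions `s` occupy the last `|s|` positions,
preserving the relative order of the two groups. -/
def invCount (s : Finset ℕ) (len : ℕ) : ℕ :=
  ((Finset.range len ×ˢ Finset.range len).filter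
    (fun ij => ij.1 ∈ s ∧ ij.2 ∉ s ∧ ij.1 < ij.2)).card


/-!
Splitting off the first factor, `P_D(a :: A, b :: B) = (T(a) / T(b)) · P_{D ∪ {a}}(A, B)`, so
interchanging two adjacent entries of `A` changes only two consecutive factors, and their quotient
is the quotient of the two sides of Segre's lemma of tangents for three points `x, y, z` of `S`
over a `(k - 3)`-subset `Z`, namely `(-1)^(t+1)`. Any interchange is an odd number of adjacent
ones.

The lemma of tangents comes from the pencil of hyperplanes through a `(k - 2)`-subset `Y` of `S`
and two further points `a, b`: the `t` tangents at `Y` and the `|S| - k` hyperplanes joining `Y`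
to the other points of `S` are `q - 1` distinct hyperplanes through neither `a` nor `b`, so their
ratios `ω a / ω b` run over `Fˣ` and multiply to `-1`. Multiplying these identities for
`Y = Z ∪ {x}, Z ∪ {y}, Z ∪ {z}`, the three secant factors at each further point multiply to `-1`,
which leaves the sign `(-1)^(|S| - k + 1) = (-1)^(t+1)`, as `(-1)^q = -1` in `F`.
-/

open Finset

section FiniteField
variable {F : Type*} [Field F] [Fintype F]

theorem prod_eq_neg_one_of_injOn {ι : Type*} {s : Finset ι} {f : ι → F}
    (hf : Set.InjOn f s) (hf0 : ∀ i ∈ s, f i ≠ 0) (hs : #s + 1 = Fintype.card F) :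
    ∏ i ∈ s, f i = -1 := by
  classical
  have himage : s.image f = univ.erase 0 := by
    refine eq_of_subset_of_card_le (fun x hx => ?_) ?_
    · obtain ⟨i, hi, rfl⟩ := mem_image.mp hx
      exact mem_erase.mpr ⟨hf0 i hi, mem_univ _⟩
    · rw [card_image_of_injOn hf, card_erase_of_mem (mem_univ _), card_univ]
      omega
  have hunits : univ.erase (0 : F) = univ.image (fun u : Fˣ => (u : F)) := by
    ext x
    simp only [mem_erase, mem_univ, and_true, mem_image, true_and]
    exact isUnit_iff_ne_zero.symm
  calc ∏ i ∈ s, f i = ∏ x ∈ s.image f, x := (prod_image (f := id) hf).symm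
    _ = ∏ u : Fˣ, (u : F) := by rw [himage, hunits, prod_image fun u _ v _ h => Units.ext h]
    _ = -1 := by
      rw [← Units.coe_prod, FiniteField.prod_univ_units_id_eq_neg_one, Units.val_neg,
        Units.val_one]

theorem neg_one_pow_succ_eq_of_add_eq_card {m t : ℕ} (h : m + t + 1 = Fintype.card F) :
    (-1 : F) ^ (m + 1) = (-1) ^ (t + 1) := by
  calc (-1 : F) ^ (m + 1) = (-1) ^ (m + t + 1) * (-1) ^ t := by
        rw [← pow_add, show m + t + 1 + t = (m + 1) + (t + t) by ring, pow_add (-1 : F) (m + 1),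
          Even.neg_one_pow ⟨t, rfl⟩, mul_one]
    _ = (-1) ^ (t + 1) := by rw [h, FiniteField.pow_card, pow_succ', neg_one_mul]

end FiniteField

theorem neg_one_pow_mul_self {R : Type*} [Monoid R] [HasDistribNeg R] (n : ℕ) :
    (-1 : R) ^ n * (-1) ^ n = 1 := by
  rw [← pow_add, ← two_mul, pow_mul, neg_one_sq, one_pow]

theorem exists_dual_vanishing_eq_one {F V : Type*} [Field F] [AddCommGroup V] [Module F V]
    [FiniteDimensional F V] {X : Finset V} (hX : #X < Module.finrank F V) {v : V}
    (hv : Submodule.span F (insert v (X : Set V)) = ⊤) :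
    ∃ φ : V →ₗ[F] F, (∀ x ∈ X, φ x = 0) ∧ φ v = 1 := by
  have hvX : v ∉ Submodule.span F (X : Set V) := by
    intro hmem
    have := finrank_span_finset_le_card (R := F) X
    rw [Set.finrank, ← Submodule.span_insert_eq_span hmem, hv, finrank_top] at this
    omega
  obtain ⟨f, hfv, hfX⟩ := Submodule.exists_dual_map_eq_bot_of_notMem hvX inferInstance
  refine ⟨(f v)⁻¹ • f, fun x hx => ?_, inv_mul_cancel₀ hfv⟩
  have : f x ∈ (Submodule.span F (X : Set V)).map f := ⟨x, Submodule.subset_span hx, rfl⟩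
  rw [hfX, Submodule.mem_bot] at this
  simp [this]

-- For `k` vectors of `F^k`, spanning is equivalent to being a basis.
def IsArc {F : Type} [Field F] {k : ℕ} (S : Finset (Fin k → F)) : Prop :=
  ∀ X ⊆ S, #X = k → Submodule.span F (X : Set (Fin k → F)) = ⊤

section Arc
variable {F : Type} [Field F] [DecidableEq F] {k : ℕ} {S : Finset (Fin k → F)}

theorem IsArc.eq_zero_of_apply_eq_zero (hS : IsArc S) {Y : Finset (Fin k → F)} (hY : Y ⊆ S)
    (hYc : #Y + 2 = k) {u v : Fin k → F} (hu : u ∈ S) (hv : v ∈ S) (huY : u ∉ Y) (hvY : v ∉ Y)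
    (huv : u ≠ v) {ω : (Fin k → F) →ₗ[F] F} (hωY : ∀ y ∈ Y, ω y = 0) (hωu : ω u = 0)
    (hωv : ω v = 0) : ω = 0 := by
  refine LinearMap.ext_on (hS _ (insert_subset hu (insert_subset hv hY)) ?_) fun w hw => ?_
  · rw [card_insert_of_notMem (by simp [huv, huY]), card_insert_of_notMem hvY]
    omega
  · simp only [coe_insert, Set.mem_insert_iff, mem_coe] at hw
    rcases hw with rfl | rfl | hw
    exacts [hωu, hωv, hωY w hw]

theorem IsArc.exists_dual (hS : IsArc S) {Y : Finset (Fin k → F)} (hY : Y ⊆ S)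
    (hYc : #Y + 2 = k) {u c : Fin k → F} (hu : u ∈ S) (hc : c ∈ S) (huY : u ∉ Y) (hcY : c ∉ Y)
    (huc : u ≠ c) :
    ∃ φ : (Fin k → F) →ₗ[F] F, (∀ y ∈ Y, φ y = 0) ∧ φ u = 0 ∧ φ c = 1 := by
  have hX : #(insert u Y) < Module.finrank F (Fin k → F) := by
    rw [Module.finrank_fin_fun, card_insert_of_notMem huY]
    omega
  obtain ⟨φ, hφX, hφc⟩ := exists_dual_vanishing_eq_one hX (v := c) <| by
    rw [← coe_insert]
    refine hS _ (insert_subset hc (insert_subset hu hY)) ?_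
    rw [card_insert_of_notMem (by simp [Ne.symm huc, hcY]), card_insert_of_notMem huY]
    omega
  exact ⟨φ, fun y hy => hφX y (mem_insert_of_mem hy), hφX u (mem_insert_self u Y), hφc⟩

theorem IsArc.eq_smul_of_div_eq (hS : IsArc S) {Y : Finset (Fin k → F)} (hY : Y ⊆ S)
    (hYc : #Y + 2 = k) {a b : Fin k → F} (ha : a ∈ S) (hb : b ∈ S) (haY : a ∉ Y) (hbY : b ∉ Y)
    (hab : a ≠ b) {ω₁ ω₂ : (Fin k → F) →ₗ[F] F} (hω₁ : ∀ y ∈ Y, ω₁ y = 0)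
    (hω₂ : ∀ y ∈ Y, ω₂ y = 0) (hω₁b : ω₁ b ≠ 0) (hω₂b : ω₂ b ≠ 0)
    (h : ω₁ a / ω₁ b = ω₂ a / ω₂ b) : ω₁ = (ω₁ b / ω₂ b) • ω₂ := by
  refine sub_eq_zero.mp <| hS.eq_zero_of_apply_eq_zero hY hYc ha hb haY hbY hab
    (fun y hy => by simp [hω₁ y hy, hω₂ y hy]) ?_ ?_
  · rw [div_eq_div_iff hω₁b hω₂b] at h
    simp only [LinearMap.sub_apply, LinearMap.smul_apply, smul_eq_mul]
    field_simp
    linear_combination h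
  · simp [hω₂b]

-- Wilson's theorem: the ratios `g p a / g p b` are the `q - 1` elements of `Fˣ`.
theorem IsArc.prod_div_eq_neg_one [Fintype F] (hS : IsArc S) {Y : Finset (Fin k → F)}
    (hY : Y ⊆ S) (hYc : #Y + 2 = k) {a b : Fin k → F} (ha : a ∈ S) (hb : b ∈ S) (haY : a ∉ Y)
    (hbY : b ∉ Y) (hab : a ≠ b) {ι : Type*} {s : Finset ι} {g : ι → (Fin k → F) →ₗ[F] F}
    (hgY : ∀ p ∈ s, ∀ y ∈ Y, g p y = 0) (hga : ∀ p ∈ s, g p a ≠ 0) (hgb : ∀ p ∈ s, g p b ≠ 0)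
    (hg : ∀ p ∈ s, ∀ p' ∈ s, ∀ c : F, g p = c • g p' → p = p')
    (hs : #s + 1 = Fintype.card F) : ∏ p ∈ s, g p a / g p b = -1 :=
  prod_eq_neg_one_of_injOn
    (fun p hp p' hp' h => hg p hp p' hp' _ <| hS.eq_smul_of_div_eq hY hYc ha hb haY hbY hab
      (hgY p hp) (hgY p' hp') (hgb p hp) (hgb p' hp') h)
    (fun p hp => div_ne_zero (hga p hp) (hgb p hp)) hs

end Arc

section Tangent
variable {F : Type} [Field F] [DecidableEq F] {k t : ℕ} {S : Finset (Fin k → F)}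
  {T : Finset (Fin k → F) → (Fin k → F) → F}

theorem IsTangentFamily.apply_ne_zero (hT : IsTangentFamily t S T) {Y : Finset (Fin k → F)}
    (hY : Y ⊆ S) (hYc : #Y + 2 = k) {s : Fin k → F} (hs : s ∈ S) (hsY : s ∉ Y) : T Y s ≠ 0 := by
  obtain ⟨Φ, -, -, -, hΦS, hΦT⟩ := hT Y hY (by omega)
  rw [hΦT]
  exact prod_ne_zero_iff.mpr fun β hβ => hΦS β hβ s hs hsY

/- Tangents and secants through `Y` are told apart by their zeros on `S \ Y`: a tangent has none,
the secant `φ u` exactly `u`. -/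
theorem IsArc.eq_of_sumElim_eq_smul (hS : IsArc S) {Y : Finset (Fin k → F)} (hY : Y ⊆ S)
    (hYc : #Y + 2 = k) {Φ : Finset ((Fin k → F) →ₗ[F] F)}
    (hΦind : ∀ α ∈ Φ, ∀ β ∈ Φ, α ≠ β → ∀ c : F, α ≠ c • β)
    (hΦS : ∀ α ∈ Φ, ∀ s ∈ S, s ∉ Y → α s ≠ 0) {U : Finset (Fin k → F)}
    (hU : ∀ u ∈ U, u ∈ S ∧ u ∉ Y) {φ : (Fin k → F) → (Fin k → F) →ₗ[F] F}
    (hφY : ∀ u ∈ U, ∀ y ∈ Y, φ u y = 0) (hφu : ∀ u ∈ U, φ u u = 0) (hφ0 : ∀ u ∈ U, φ u ≠ 0)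
    {p p' : ((Fin k → F) →ₗ[F] F) ⊕ (Fin k → F)} (hp : p ∈ Φ.disjSum U)
    (hp' : p' ∈ Φ.disjSum U) {c : F} (h : Sum.elim id φ p = c • Sum.elim id φ p') : p = p' := by
  rcases p with β | u <;> rcases p' with β' | u' <;>
    simp only [inl_mem_disjSum, inr_mem_disjSum] at hp hp'
  · by_contra hne
    exact hΦind β hp β' hp' (by simpa using hne) c h
  · refine absurd ?_ (hΦS β hp u' (hU u' hp').1 (hU u' hp').2)
    simpa [hφu u' hp'] using LinearMap.congr_fun h u'
  · have hc : c ≠ 0 := by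
      rintro rfl
      exact hφ0 u hp (by simpa using h)
    refine absurd ?_ (hΦS β' hp' u (hU u hp).1 (hU u hp).2)
    simpa [hφu u hp, hc] using (LinearMap.congr_fun h u).symm
  · by_contra hne
    refine hφ0 u hp <| hS.eq_zero_of_apply_eq_zero hY hYc (hU u hp).1 (hU u' hp').1 (hU u hp).2
      (hU u' hp').2 (by simpa using hne) (hφY u hp) (hφu u hp) ?_
    simpa [hφu u' hp'] using LinearMap.congr_fun h u'

/- The `t` tangents and the `|S| - k` secants `φ u` are `q - 1` distinct hyperplanes of the pencil
through `Y`. -/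
theorem IsTangentFamily.apply_eq_neg_mul_prod [Fintype F] (hT : IsTangentFamily t S T)
    (hS : IsArc S) (hcard : #S + t + 1 = Fintype.card F + k) {Y : Finset (Fin k → F)}
    (hY : Y ⊆ S) (hYc : #Y + 2 = k) {a b : Fin k → F} (ha : a ∈ S) (hb : b ∈ S) (haY : a ∉ Y)
    (hbY : b ∉ Y) (hab : a ≠ b) {U : Finset (Fin k → F)} (hU : U = S \ insert a (insert b Y))
    (φ : (Fin k → F) → (Fin k → F) →ₗ[F] F) (hφY : ∀ u ∈ U, ∀ y ∈ Y, φ u y = 0)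
    (hφu : ∀ u ∈ U, φ u u = 0) (hφa : ∀ u ∈ U, φ u a = 1) :
    T Y a = -T Y b * ∏ u ∈ U, φ u b := by
  obtain ⟨Φ, hΦcard, hΦind, hΦY, hΦS, hΦT⟩ := hT Y hY (by omega)
  have hUcard : #U + k = #S := by
    have := card_sdiff_add_card_eq_card (insert_subset ha (insert_subset hb hY))
    rw [card_insert_of_notMem (by simp [hab, haY]), card_insert_of_notMem hbY] at this
    rw [hU]
    omega
  have hmemU : ∀ u ∈ U, u ∈ S ∧ u ∉ Y ∧ u ≠ b := fun u hu => by
    simp only [hU, mem_sdiff, mem_insert, not_or] at hu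
    exact ⟨hu.1, hu.2.2.2, hu.2.2.1⟩
  have hφ0 : ∀ u ∈ U, φ u ≠ 0 := fun u hu h0 => by simpa [h0] using hφa u hu
  let g : ((Fin k → F) →ₗ[F] F) ⊕ (Fin k → F) → (Fin k → F) →ₗ[F] F := Sum.elim id φ
  have hg : ∀ p ∈ Φ.disjSum U, (∀ y ∈ Y, g p y = 0) ∧ g p a ≠ 0 ∧ g p b ≠ 0 := by
    rintro (β | u) hp
    · rw [inl_mem_disjSum] at hp
      exact ⟨hΦY β hp, hΦS β hp a ha haY, hΦS β hp b hb hbY⟩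
    · rw [inr_mem_disjSum] at hp
      obtain ⟨huS, huY, hub⟩ := hmemU u hp
      exact ⟨hφY u hp, by simp [g, hφa u hp], fun h0 => hφ0 u hp <|
        hS.eq_zero_of_apply_eq_zero hY hYc huS hb huY hbY hub (hφY u hp) (hφu u hp) h0⟩
  have hwilson := hS.prod_div_eq_neg_one hY hYc ha hb haY hbY hab (fun p hp => (hg p hp).1)
    (fun p hp => (hg p hp).2.1) (fun p hp => (hg p hp).2.2)
    (fun p hp p' hp' c => hS.eq_of_sumElim_eq_smul hY hYc hΦind hΦS
      (fun u hu => ⟨(hmemU u hu).1, (hmemU u hu).2.1⟩) hφY hφu hφ0 hp hp')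
    (by rw [card_disjSum]; omega)
  simp only [prod_disjSum, g, Sum.elim_inl, Sum.elim_inr, id, prod_div_distrib, ← hΦT]
    at hwilson
  rw [prod_congr rfl fun u hu => by rw [hφa u hu], prod_const_one] at hwilson
  have hTb : T Y b ≠ 0 := hT.apply_ne_zero hY hYc hb hbY
  have hφb : ∏ u ∈ U, φ u b ≠ 0 :=
    prod_ne_zero_iff.mpr fun u hu => (hg (.inr u) (inr_mem_disjSum.mpr hu)).2.2
  field_simp at hwilson
  linear_combination hwilson

/- The forms vanishing on `Y` form a plane, in which `χ = χ y • φ + (ψ x)⁻¹ • ψ`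
(compare both sides on `Y`, `x`, `y`); evaluate at `z`. -/
theorem IsArc.apply_mul_apply_mul_apply_eq_neg_one (hS : IsArc S) {Y : Finset (Fin k → F)}
    (hY : Y ⊆ S) (hYc : #Y + 2 = k) {x y z : Fin k → F} (hx : x ∈ S) (hy : y ∈ S) (hxY : x ∉ Y)
    (hyY : y ∉ Y) (hxy : x ≠ y) {φ ψ χ : (Fin k → F) →ₗ[F] F} (hφ : ∀ w ∈ Y, φ w = 0)
    (hψ : ∀ w ∈ Y, ψ w = 0) (hχ : ∀ w ∈ Y, χ w = 0) (hφx : φ x = 0) (hφy : φ y = 1)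
    (hψy : ψ y = 0) (hψz : ψ z = 1) (hχz : χ z = 0) (hχx : χ x = 1) :
    φ z * ψ x * χ y = -1 := by
  have hψx : ψ x ≠ 0 := fun h0 => by
    simp [hS.eq_zero_of_apply_eq_zero hY hYc hx hy hxY hyY hxy hψ h0 hψy] at hψz
  have hrel : χ - χ y • φ - (ψ x)⁻¹ • ψ = 0 :=
    hS.eq_zero_of_apply_eq_zero hY hYc hx hy hxY hyY hxy
      (fun w hw => by simp [hφ w hw, hψ w hw, hχ w hw]) (by simp [hφx, hχx, hψx])
      (by simp [hφy, hψy])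
  have hz := LinearMap.congr_fun hrel z
  simp only [LinearMap.sub_apply, LinearMap.smul_apply, smul_eq_mul, hχz, hψz,
    LinearMap.zero_apply] at hz
  field_simp at hz
  linear_combination -hz

theorem IsTangentFamily.exists_apply_eq_neg_mul_prod [Fintype F] (hT : IsTangentFamily t S T)
    (hS : IsArc S) (hcard : #S + t + 1 = Fintype.card F + k) {Z : Finset (Fin k → F)}
    (hZ : Z ⊆ S) (hZc : #Z + 3 = k) {x y z : Fin k → F} (hx : x ∈ S) (hy : y ∈ S) (hz : z ∈ S)
    (hxy : x ≠ y) (hxz : x ≠ z) (hyz : y ≠ z) (hxZ : x ∉ Z) (hyZ : y ∉ Z) (hzZ : z ∉ Z)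
    {W : Finset (Fin k → F)} (hW : W = S \ insert x (insert y (insert z Z))) :
    ∃ φ : (Fin k → F) → (Fin k → F) →ₗ[F] F, (∀ u ∈ W, ∀ w ∈ insert u (insert x Z), φ u w = 0) ∧
      (∀ u ∈ W, φ u y = 1) ∧ T (insert x Z) y = -T (insert x Z) z * ∏ u ∈ W, φ u z := by
  have hmemW : ∀ u ∈ W, u ∈ S ∧ u ∉ insert x Z ∧ u ≠ y := fun u hu => by
    simp only [hW, mem_sdiff, mem_insert, not_or] at hu
    exact ⟨hu.1, by simp [hu.2.1, hu.2.2.2.2], hu.2.2.1⟩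
  have hxZS : insert x Z ⊆ S := insert_subset hx hZ
  have hxZc : #(insert x Z) + 2 = k := by
    rw [card_insert_of_notMem hxZ]
    omega
  have hyxZ : y ∉ insert x Z := by simp [Ne.symm hxy, hyZ]
  choose! φ hφY hφu hφy using fun u hu =>
    hS.exists_dual hxZS hxZc (hmemW u hu).1 hy (hmemW u hu).2.1 hyxZ (hmemW u hu).2.2
  refine ⟨φ, fun u hu => forall_mem_insert _ _ _ |>.mpr ⟨hφu u hu, hφY u hu⟩, hφy, ?_⟩
  exact hT.apply_eq_neg_mul_prod hS hcard hxZS hxZc hy hz hyxZ (by simp [Ne.symm hxz, hzZ]) hyz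
    (by rw [hW]; ext; simp only [mem_sdiff, mem_insert]; tauto) φ hφY hφu hφy

-- Segre's lemma of tangents.
theorem IsTangentFamily.lemma_of_tangents [Fintype F] (hT : IsTangentFamily t S T)
    (hS : IsArc S) (hcard : #S + t + 1 = Fintype.card F + k) {Z : Finset (Fin k → F)}
    (hZ : Z ⊆ S) (hZc : #Z + 3 = k) {x y z : Fin k → F} (hx : x ∈ S) (hy : y ∈ S) (hz : z ∈ S)
    (hxy : x ≠ y) (hxz : x ≠ z) (hyz : y ≠ z) (hxZ : x ∉ Z) (hyZ : y ∉ Z) (hzZ : z ∉ Z) :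
    T (insert x Z) y * T (insert y Z) z * T (insert z Z) x =
      (-1) ^ (t + 1) * (T (insert x Z) z * T (insert y Z) x * T (insert z Z) y) := by
  set W := S \ insert x (insert y (insert z Z)) with hW
  obtain ⟨φ, hφ0, hφ1, E1⟩ := hT.exists_apply_eq_neg_mul_prod hS hcard hZ hZc hx hy hz hxy hxz
    hyz hxZ hyZ hzZ hW
  have hrotate : ∀ {a b c : Fin k → F}, insert a (insert b (insert c Z)) = insert x (insert y
      (insert z Z)) → W = S \ insert a (insert b (insert c Z)) := fun h => by rw [h]
  obtain ⟨ψ, hψ0, hψ1, E2⟩ := hT.exists_apply_eq_neg_mul_prod hS hcard hZ hZc hy hz hx hyz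
    (Ne.symm hxy) (Ne.symm hxz) hyZ hzZ hxZ (hrotate (by ext; simp only [mem_insert]; tauto))
  obtain ⟨χ, hχ0, hχ1, E3⟩ := hT.exists_apply_eq_neg_mul_prod hS hcard hZ hZc hz hx hy
    (Ne.symm hxz) (Ne.symm hyz) hxy hzZ hxZ hyZ (hrotate (by ext; simp only [mem_insert]; tauto))
  have hcyclic : ∀ u ∈ W, φ u z * ψ u x * χ u y = -1 := by
    intro u hu
    have hu' : u ∈ S ∧ u ∉ insert x (insert y (insert z Z)) := mem_sdiff.mp hu
    simp only [mem_insert, not_or] at hu'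
    obtain ⟨huS, hux, huy, huz, huZ⟩ := hu'
    have hsub : ∀ v, insert u Z ⊆ insert u (insert v Z) := fun v =>
      insert_subset_insert u (subset_insert v Z)
    have hmem : ∀ v, v ∈ insert u (insert v Z) := fun v => mem_insert_of_mem (mem_insert_self v Z)
    exact hS.apply_mul_apply_mul_apply_eq_neg_one (insert_subset huS hZ)
      (by rw [card_insert_of_notMem huZ]; omega) hx hy (by simp [Ne.symm hux, hxZ])
      (by simp [Ne.symm huy, hyZ]) hxy (fun w hw => hφ0 u hu w (hsub x hw))
      (fun w hw => hψ0 u hu w (hsub y hw)) (fun w hw => hχ0 u hu w (hsub z hw))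
      (hφ0 u hu x (hmem x)) (hφ1 u hu) (hψ0 u hu y (hmem y)) (hψ1 u hu) (hχ0 u hu z (hmem z))
      (hχ1 u hu)
  have hWcard : #W + t + 1 = Fintype.card F := by
    have := card_sdiff_add_card_eq_card
      (insert_subset hx (insert_subset hy (insert_subset hz hZ)))
    rw [card_insert_of_notMem (by simp [hxy, hxz, hxZ]),
      card_insert_of_notMem (by simp [hyz, hyZ]), card_insert_of_notMem hzZ, ← hW] at this
    omega
  calc T (insert x Z) y * T (insert y Z) z * T (insert z Z) x
      = -(T (insert x Z) z * T (insert y Z) x * T (insert z Z) y) *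
          ∏ u ∈ W, (φ u z * ψ u x * χ u y) := by
        rw [E1, E2, E3, prod_mul_distrib, prod_mul_distrib]
        ring
    _ = (-1) ^ (t + 1) * (T (insert x Z) z * T (insert y Z) x * T (insert z Z) y) := by
        rw [prod_congr rfl hcyclic, prod_const, ← neg_one_pow_succ_eq_of_add_eq_card hWcard]
        ring

theorem IsTangentFamily.lemma_of_tangents_div [Fintype F] (hT : IsTangentFamily t S T)
    (hS : IsArc S) (hcard : #S + t + 1 = Fintype.card F + k) {Z : Finset (Fin k → F)}
    (hZ : Z ⊆ S) (hZc : #Z + 3 = k) {x y z : Fin k → F} (hx : x ∈ S) (hy : y ∈ S) (hz : z ∈ S)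
    (hxy : x ≠ y) (hxz : x ≠ z) (hyz : y ≠ z) (hxZ : x ∉ Z) (hyZ : y ∉ Z) (hzZ : z ∉ Z) :
    T (insert z Z) y * T (insert y Z) x / T (insert y Z) z =
      (-1) ^ (t + 1) * (T (insert z Z) x * T (insert x Z) y / T (insert x Z) z) := by
  have hins : ∀ {v}, v ∈ S → v ∉ Z → insert v Z ⊆ S ∧ #(insert v Z) + 2 = k := fun hv hvZ =>
    ⟨insert_subset hv hZ, by rw [card_insert_of_notMem hvZ]; omega⟩
  have hxz' : T (insert x Z) z ≠ 0 :=
    hT.apply_ne_zero (hins hx hxZ).1 (hins hx hxZ).2 hz (by simp [Ne.symm hxz, hzZ])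
  have hyz' : T (insert y Z) z ≠ 0 :=
    hT.apply_ne_zero (hins hy hyZ).1 (hins hy hyZ).2 hz (by simp [Ne.symm hyz, hzZ])
  field_simp
  linear_combination (-(-1) ^ (t + 1) : F) *
      hT.lemma_of_tangents hS hcard hZ hZc hx hy hz hxy hxz hyz hxZ hyZ hzZ -
    T (insert z Z) y * T (insert y Z) x * T (insert x Z) z * neg_one_pow_mul_self (R := F) (t + 1)

end Tangent

section SegreData
variable {F : Type} {k : ℕ} {S D : Finset (Fin k → F)}

structure IsSegreData (S D : Finset (Fin k → F)) (A B : List (Fin k → F)) : Prop where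
  nodup : (A ++ B).Nodup
  mem : ∀ v ∈ A ++ B, v ∈ S
  notMem_base : ∀ v ∈ A ++ B, v ∉ D
  base_subset : D ⊆ S
  length_eq : A.length = B.length
  card_add_length : #D + A.length + 1 = k

theorem IsSegreData.perm {A A' B : List (Fin k → F)} (h : IsSegreData S D A B)
    (hA : A.Perm A') : IsSegreData S D A' B where
  nodup := (hA.append_right B).nodup_iff.mp h.nodup
  mem v hv := h.mem v ((hA.append_right B).mem_iff.mpr hv)
  notMem_base v hv := h.notMem_base v ((hA.append_right B).mem_iff.mpr hv)
  base_subset := h.base_subset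
  length_eq := hA.length_eq ▸ h.length_eq
  card_add_length := hA.length_eq ▸ h.card_add_length

theorem IsSegreData.cons [DecidableEq F] {a b : Fin k → F} {A B : List (Fin k → F)}
    (h : IsSegreData S D (a :: A) (b :: B)) : IsSegreData S (insert a D) A B := by
  have hsub' : (A ++ B).Sublist (A ++ b :: B) := (List.sublist_cons_self b B).append_left A
  have hsub : (A ++ B).Sublist (a :: A ++ b :: B) := hsub'.cons a
  have haAB : a ∉ A ++ B := fun ha => (List.nodup_cons.mp h.nodup).1 (hsub'.subset ha)
  have haD : a ∉ D := h.notMem_base a List.mem_cons_self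
  refine ⟨h.nodup.sublist hsub, fun v hv => h.mem v (hsub.subset hv), fun v hv => ?_,
    insert_subset (h.mem a List.mem_cons_self) h.base_subset,
    Nat.succ_injective (by simpa using h.length_eq), ?_⟩
  · rw [mem_insert, not_or]
    exact ⟨fun hva => haAB (hva ▸ hv), h.notMem_base v (hsub.subset hv)⟩
  · have := h.card_add_length
    rw [card_insert_of_notMem haD]
    rw [List.length_cons] at this
    omega

end SegreData

section Segre
variable {F : Type} [Field F] [DecidableEq F] {k t : ℕ} {S : Finset (Fin k → F)}
  {T : Finset (Fin k → F) → (Fin k → F) → F}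

theorem segreP_cons (T : Finset (Fin k → F) → (Fin k → F) → F) (D : Finset (Fin k → F))
    (a b : Fin k → F) (A B : List (Fin k → F)) :
    segreP T D (a :: A) (b :: B) =
      T (D ∪ B.toFinset) a * (T (D ∪ B.toFinset) b)⁻¹ * segreP T (insert a D) A B := by
  simp only [segreP, List.length_cons, prod_range_succ', List.take_zero, List.take_succ_cons,
    List.drop_succ_cons, List.drop_zero, List.getD_cons_succ, List.getD_cons_zero,
    List.toFinset_nil, List.toFinset_cons, union_empty, union_insert, insert_union]
  ring

theorem segreP_swap_head [Fintype F] (hT : IsTangentFamily t S T) (hS : IsArc S)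
    (hcard : #S + t + 1 = Fintype.card F + k) {D : Finset (Fin k → F)} {a a' b b' : Fin k → F}
    {A B : List (Fin k → F)} (h : IsSegreData S D (a :: a' :: A) (b :: b' :: B)) :
    segreP T D (a' :: a :: A) (b :: b' :: B) =
      (-1) ^ (t + 1) * segreP T D (a :: a' :: A) (b :: b' :: B) := by
  have hsub : (a :: a' :: b' :: B).Sublist (a :: a' :: A ++ b :: b' :: B) :=
    (((List.sublist_cons_self b _).trans (List.sublist_append_right A _)).cons_cons a').cons_cons a
  have hnd := h.nodup.sublist hsub
  simp only [List.nodup_cons, List.mem_cons, not_or] at hnd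
  obtain ⟨⟨haa', hab', haB⟩, ⟨ha'b', ha'B⟩, hb'B, hBnd⟩ := hnd
  have hmem : ∀ v ∈ a :: a' :: b' :: B, v ∈ S ∧ v ∉ D := fun v hv =>
    ⟨h.mem v (hsub.subset hv), h.notMem_base v (hsub.subset hv)⟩
  set Z := D ∪ B.toFinset with hZ
  have hZS : Z ⊆ S := union_subset h.base_subset fun v hv => (hmem v (by simp_all)).1
  have hZc : #Z + 3 = k := by
    have hlen := h.length_eq
    have hDc := h.card_add_length
    rw [card_union_of_disjoint, List.toFinset_card_of_nodup hBnd]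
    · simp only [List.length_cons] at hlen hDc
      omega
    · exact disjoint_left.mpr fun v hvD hvB => (hmem v (by simp_all)).2 hvD
  have hnotZ : ∀ v ∈ [a, a', b'], v ∉ B → v ∈ S ∧ v ∉ Z := fun v hv hvB =>
    ⟨(hmem v (by simp_all)).1, by simp [hZ, (hmem v (by simp_all)).2, hvB]⟩
  obtain ⟨haS, haZ⟩ := hnotZ a (by simp) haB
  obtain ⟨ha'S, ha'Z⟩ := hnotZ a' (by simp) ha'B
  obtain ⟨hb'S, hb'Z⟩ := hnotZ b' (by simp) hb'B
  rw [segreP_cons, segreP_cons, segreP_cons, segreP_cons, Finset.insert_comm a a' D]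
  simp only [List.toFinset_cons, union_insert, insert_union, ← hZ]
  linear_combination (T (insert b' Z) b)⁻¹ * segreP T (insert a' (insert a D)) A B *
    hT.lemma_of_tangents_div hS hcard hZS hZc haS ha'S hb'S haa' hab' ha'b' haZ ha'Z hb'Z

theorem segreP_append_swap [Fintype F] (hT : IsTangentFamily t S T) (hS : IsArc S)
    (hcard : #S + t + 1 = Fintype.card F + k) {D : Finset (Fin k → F)} {a a' : Fin k → F}
    {L A B : List (Fin k → F)} (h : IsSegreData S D (L ++ a :: a' :: A) B) :
    segreP T D (L ++ a' :: a :: A) B = (-1) ^ (t + 1) * segreP T D (L ++ a :: a' :: A) B := by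
  induction L generalizing D B with
  | nil =>
    obtain ⟨b, b', B, rfl⟩ : ∃ b b' B', B = b :: b' :: B' := by
      have := h.length_eq
      match B, this with
      | b :: b' :: B', _ => exact ⟨b, b', B', rfl⟩
    exact segreP_swap_head hT hS hcard h
  | cons c L ih =>
    obtain ⟨b, B, rfl⟩ : ∃ b B', B = b :: B' := by
      have := h.length_eq
      match B, this with
      | b :: B', _ => exact ⟨b, B', rfl⟩
    simp only [List.cons_append, segreP_cons] at h ⊢
    rw [ih h.cons]
    ring

theorem segreP_append_move [Fintype F] (hT : IsTangentFamily t S T) (hS : IsArc S)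
    (hcard : #S + t + 1 = Fintype.card F + k) {D : Finset (Fin k → F)} {x : Fin k → F}
    {L M R B : List (Fin k → F)} (h : IsSegreData S D (L ++ M ++ x :: R) B) :
    segreP T D (L ++ x :: M ++ R) B =
      ((-1) ^ (t + 1)) ^ M.length * segreP T D (L ++ M ++ x :: R) B := by
  induction M generalizing L with
  | nil => simp
  | cons m M ih =>
    have h' : IsSegreData S D (L ++ m :: x :: (M ++ R)) B :=
      h.perm (by simpa using (List.perm_middle.cons m).append_left L)
    calc segreP T D (L ++ x :: (m :: M) ++ R) B
        = (-1) ^ (t + 1) * segreP T D (L ++ [m] ++ x :: M ++ R) B := by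
          simpa using segreP_append_swap hT hS hcard h'
      _ = (-1) ^ (t + 1) *
          (((-1) ^ (t + 1)) ^ M.length * segreP T D (L ++ m :: M ++ x :: R) B) := by
          rw [ih (by simpa using h)]
          simp
      _ = ((-1) ^ (t + 1)) ^ (m :: M).length * segreP T D (L ++ m :: M ++ x :: R) B := by
          rw [List.length_cons, pow_succ]
          ring

-- `2 |M| + 1` adjacent interchanges: `c` moves left past `M`, swaps with `a`, which moves right.
theorem segreP_append_transpose [Fintype F] (hT : IsTangentFamily t S T) (hS : IsArc S)
    (hcard : #S + t + 1 = Fintype.card F + k) {D : Finset (Fin k → F)} {a c : Fin k → F}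
    {L M R B : List (Fin k → F)} (h : IsSegreData S D (L ++ a :: M ++ c :: R) B) :
    segreP T D (L ++ c :: M ++ a :: R) B =
      (-1) ^ (t + 1) * segreP T D (L ++ a :: M ++ c :: R) B := by
  have h₁ : IsSegreData S D (L ++ a :: c :: (M ++ R)) B :=
    h.perm (by simpa using (List.perm_middle.cons a).append_left L)
  have h₂ : IsSegreData S D (L ++ c :: M ++ a :: R) B :=
    h₁.perm (by
      simpa using ((List.Perm.swap c a _).trans (List.perm_middle.symm.cons c)).append_left L)
  have hmove₁ := segreP_append_move hT hS hcard (L := L ++ [a]) (M := M) (x := c) (R := R)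
    (by simpa using h)
  have hswap := segreP_append_swap hT hS hcard h₁
  have hmove₂ := segreP_append_move hT hS hcard (L := L ++ [c]) (M := M) (x := a) (R := R)
    (by simpa using h₂)
  have hε : ((-1 : F) ^ (t + 1)) ^ M.length * ((-1) ^ (t + 1)) ^ M.length = 1 := by
    rw [← mul_pow, neg_one_pow_mul_self, one_pow]
  simp only [List.append_assoc, List.cons_append, List.nil_append]
    at hmove₁ hswap hmove₂ ⊢
  linear_combination (-segreP T D (L ++ c :: (M ++ a :: R)) B +
      (-1) ^ (t + 1) * segreP T D (L ++ a :: (M ++ c :: R)) B) * hε -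
    ((-1) ^ (t + 1)) ^ M.length * hmove₂ + ((-1) ^ (t + 1)) ^ M.length * hswap +
    ((-1) ^ (t + 1)) ^ M.length * (-1) ^ (t + 1) * hmove₁

theorem segreP_set_set [Fintype F] (hT : IsTangentFamily t S T) (hS : IsArc S)
    (hcard : #S + t + 1 = Fintype.card F + k) {D : Finset (Fin k → F)}
    {A B : List (Fin k → F)} (h : IsSegreData S D A B) {i j : ℕ} (hij : i < j)
    (hj : j < A.length) :
    segreP T D ((A.set i (A.getD j 0)).set j (A.getD i 0)) B = (-1) ^ (t + 1) * segreP T D A B := by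
  obtain ⟨L, a, M, c, R, rfl, rfl, rfl⟩ : ∃ L a M c R, A = L ++ a :: M ++ c :: R ∧
      L.length = i ∧ L.length + M.length + 1 = j := by
    refine ⟨A.take i, A[i], (A.drop (i + 1)).take (j - i - 1), A[j], A.drop (j + 1), ?_,
      by simp; omega, by simp; omega⟩
    conv_lhs => rw [← List.take_append_drop i A, List.drop_eq_getElem_cons (by omega),
      ← List.take_append_drop (j - i - 1) (A.drop (i + 1)), List.drop_drop,
      show i + 1 + (j - i - 1) = j by omega, List.drop_eq_getElem_cons hj]
    simp
  have hM : L.length + M.length + 1 - L.length = M.length + 1 := by omega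
  have hlt : ¬ L.length + M.length + 1 < L.length := by omega
  simpa [List.getD_eq_getElem?_getD, List.getElem?_append, List.set_append, hM, hlt]
    using segreP_append_transpose hT hS hcard h

end Segre

theorem statement6_general (k q t n : ℕ)
    (F : Type) [Field F] [Fintype F] [DecidableEq F] (hF : Fintype.card F = q)
    (S : Finset (Fin k → F))
    (harc : ∀ A ⊆ S, A.card = k →
      LinearIndependent F (fun v : {x // x ∈ A} => (v : Fin k → F)) ∧
      Submodule.span F (A : Set (Fin k → F)) = ⊤)
    (ht : S.card + t = q + k - 1)
    (T : Finset (Fin k → F) → (Fin k → F) → F) (hT : IsTangentFamily t S T)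
    (A B : List (Fin k → F)) (hA : A.length = n) (hB : B.length = n)
    (hnd : (A ++ B).Nodup) (hin : ∀ v ∈ A ++ B, v ∈ S)
    (D : Finset (Fin k → F)) (hD : D ⊆ S) (hDcard : D.card + n + 1 = k)
    (hdisj : ∀ v ∈ A ++ B, v ∉ D)
    (i j : ℕ) (hi : i < n) (hj : j < n) (hij : i ≠ j)
    (Astar : List (Fin k → F))
    (hAstar : Astar = (A.set i (A.getD j 0)).set j (A.getD i 0)) :
    segreP T D Astar B = (-1 : F) ^ (t + 1) * segreP T D A B := by
  have hS : IsArc S := fun X hX hXc => (harc X hX hXc).2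
  have hcard : #S + t + 1 = Fintype.card F + k := by
    have := Fintype.card_pos (α := F)
    omega
  have h : IsSegreData S D A B := ⟨hnd, hin, hdisj, hD, hA.trans hB.symm, hA ▸ hDcard⟩
  subst hAstar
  rcases Nat.lt_or_gt_of_ne hij with hlt | hgt
  · exact segreP_set_set hT hS hcard h hlt (hA ▸ hj)
  · rw [List.set_comm _ _ hij]
    exact segreP_set_set hT hS hcard h hgt (hA ▸ hi)

/-- interchanging two entries of `A` in the Segre product `P_D(A, B)`
multiplies it by `(−1)^{t+1}`:  `P_D(A*, B) = (−1)^{t+1} P_D(A, B)`. -/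
theorem statement6 (p h k q t n : ℕ) (hp : p.Prime) (hh : 1 ≤ h) (hq : q = p ^ h)
    (hk : 3 ≤ k)
    (F : Type) [Field F] [Fintype F] [DecidableEq F] (hF : Fintype.card F = q)
    (S : Finset (Fin k → F))
    (harc : ∀ A ⊆ S, A.card = k →
      LinearIndependent F (fun v : {x // x ∈ A} => (v : Fin k → F)) ∧
      Submodule.span F (A : Set (Fin k → F)) = ⊤)
    (ht : S.card + t = q + k - 1) (ht1 : 1 ≤ t) (hSk : k ≤ S.card)
    (T : Finset (Fin k → F) → (Fin k → F) → F) (hT : IsTangentFamily t S T)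
    (A B : List (Fin k → F)) (hA : A.length = n) (hB : B.length = n)
    (hnd : (A ++ B).Nodup) (hin : ∀ v ∈ A ++ B, v ∈ S)
    (D : Finset (Fin k → F)) (hD : D ⊆ S) (hDcard : D.card + n + 1 = k)
    (hdisj : ∀ v ∈ A ++ B, v ∉ D)
    (i j : ℕ) (hi : i < n) (hj : j < n) (hij : i ≠ j)
    (Astar : List (Fin k → F))
    (hAstar : Astar = (A.set i (A.getD j 0)).set j (A.getD i 0)) :
    segreP T D Astar B = (-1 : F) ^ (t + 1) * segreP T D A B :=
  statement6_general k q t n F hF S harc ht T hT A B hA hB hnd hin D hD hDcard hdisj i j hi hj hij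
    Astar hAstar
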